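/- For all 0 ≤ m ≤ m': E[ S_T · 1_{M_T > m} ] · ℙ(M_T > m') ≤ E[ S_T · 1_{M_T > m'} ] · ℙ(M_T > m). Equivalently, the function d(m) := E[S_T | M_T > m] is nondecreasing on the set of m with ℙ(M_T > m) > 0. -/

import Mathlib

open MeasureTheory Set Filter

noncomputable section

/-- The running maximum `M_T(ω) = sup_{t ∈ [0,T]} S_t(ω)`. -/
def runMax {Ω : Type} (S : ℝ → Ω → ℝ) (T : ℝ) (ω : Ω) : ℝ :=
  ⨆ t : Icc (0:ℝ) T, S t ω

/-- `S` is an adapted martingale on the time interval `[0,T]` with continuous sample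
paths, a.s. nonnegative values, and initial value `s₀`. -/
structure IsNonnegContMart {Ω : Type} [mΩ : MeasurableSpace Ω]
    (ℙ : Measure Ω) (ℱ : Filtration ℝ mΩ) (S : ℝ → Ω → ℝ) (s₀ T : ℝ) : Prop where
  adapted : ∀ t ∈ Icc (0:ℝ) T, StronglyMeasurable[ℱ t] (S t)
  integrable : ∀ t ∈ Icc (0:ℝ) T, Integrable (S t) ℙ
  mart : ∀ s t : ℝ, s ∈ Icc (0:ℝ) T → t ∈ Icc (0:ℝ) T → s ≤ t →
    ℙ[S t|ℱ s] =ᵐ[ℙ] S s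
  contPaths : ∀ ω, ContinuousOn (fun t => S t ω) (Icc (0:ℝ) T)
  nonneg : ∀ t ∈ Icc (0:ℝ) T, ∀ᵐ ω ∂ℙ, 0 ≤ S t ω
  init : ∀ᵐ ω ∂ℙ, S 0 ω = s₀

/-! Doob's maximal inequality gives `m' · ℙ(M_T > m') ≤ E[S_T ; M_T > m']`: the average of `S_T`
over `{M_T > m'}` is at least `m'`. On the band `{m < M_T ≤ m'}` instead `S_T ≤ M_T ≤ m'`, so
enlarging `{M_T > m'}` to `{M_T > m}` can only lower the average.

By path continuity the event `{M_T > c}` is the increasing union of the events that `S` exceeds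
`c` at one of the first `n` times of a dense sequence in `[0, T]`; for finitely many times Doob's
inequality follows by splitting according to the first time at which `S` exceeds `c`. -/

theorem setIntegral_eq_of_condExp_ae_eq {Ω E : Type*} [NormedAddCommGroup E] [NormedSpace ℝ E]
    [CompleteSpace E] {m mΩ : MeasurableSpace Ω} {μ : Measure Ω} (hm : m ≤ mΩ)
    [SigmaFinite (μ.trim hm)] {f g : Ω → E} (hf : Integrable f μ) (hfg : μ[f|m] =ᵐ[μ] g)
    {s : Set Ω} (hs : MeasurableSet[m] s) :
    ∫ ω in s, f ω ∂μ = ∫ ω in s, g ω ∂μ := by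
  rw [← setIntegral_condExp hm hf hs]
  exact setIntegral_congr_ae (hm s hs) (hfg.mono fun ω h _ => h)

theorem mul_measureReal_biUnion_lt_le_setIntegral {ι Ω : Type*} [LinearOrder ι]
    {mΩ : MeasurableSpace Ω} {μ : Measure Ω} [IsFiniteMeasure μ] {ℱ : Filtration ι mΩ}
    {S : ι → Ω → ℝ} {X : Ω → ℝ} {F : Finset ι} (hX : Integrable X μ)
    (hadp : ∀ t ∈ F, StronglyMeasurable[ℱ t] (S t)) (hmart : ∀ t ∈ F, μ[X|ℱ t] =ᵐ[μ] S t)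
    (c : ℝ) :
    c * μ.real (⋃ t ∈ F, {ω | c < S t ω}) ≤ ∫ ω in ⋃ t ∈ F, {ω | c < S t ω}, X ω ∂μ := by
  classical
  induction F using Finset.induction_on_max with
  | empty => simp
  | insert a F hlt ih =>
    have hF : MeasurableSet[ℱ a] (⋃ t ∈ F, {ω | c < S t ω}) :=
      Finset.measurableSet_biUnion F fun t ht => ℱ.mono (hlt t ht).le _ <|
        measurableSet_lt measurable_const
          (hadp t (Finset.mem_insert_of_mem ht)).measurable
    have hnew : MeasurableSet[ℱ a] ({ω | c < S a ω} \ ⋃ t ∈ F, {ω | c < S t ω}) :=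
      (measurableSet_lt measurable_const
        (hadp a (Finset.mem_insert_self a F)).measurable).diff hF
    have hmart_a := hmart a (Finset.mem_insert_self a F)
    have hnew_le : c * μ.real ({ω | c < S a ω} \ ⋃ t ∈ F, {ω | c < S t ω})
        ≤ ∫ ω in {ω | c < S a ω} \ ⋃ t ∈ F, {ω | c < S t ω}, X ω ∂μ := by
      rw [setIntegral_eq_of_condExp_ae_eq (ℱ.le a) hX hmart_a hnew]
      exact setIntegral_ge_of_const_le_real (ℱ.le a _ hnew) (measure_ne_top μ _)
        (fun ω hω => hω.1.le) (integrable_condExp.congr hmart_a).integrableOn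
    have hunion : ⋃ t ∈ insert a F, {ω | c < S t ω}
        = (⋃ t ∈ F, {ω | c < S t ω}) ∪ ({ω | c < S a ω} \ ⋃ t ∈ F, {ω | c < S t ω}) := by
      rw [Finset.set_biUnion_insert, Set.union_comm, Set.union_sdiff_self]
    rw [hunion, measureReal_union disjoint_sdiff_right (ℱ.le a _ hnew) (measure_ne_top μ _),
      setIntegral_union disjoint_sdiff_right (ℱ.le a _ hnew) hX.integrableOn hX.integrableOn,
      mul_add]
    exact add_le_add (ih (fun t ht => hadp t (Finset.mem_insert_of_mem ht))
      (fun t ht => hmart t (Finset.mem_insert_of_mem ht))) hnew_le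

section runMax

variable {Ω : Type} {mΩ : MeasurableSpace Ω} {ℱ : Filtration ℝ mΩ} {S : ℝ → Ω → ℝ} {T : ℝ}

theorem bddAbove_range_of_continuousOn_Icc
    (hcont : ∀ ω, ContinuousOn (fun t => S t ω) (Icc (0:ℝ) T)) (ω : Ω) :
    BddAbove (range fun t : Icc (0:ℝ) T => S t ω) :=
  (isCompact_range ((hcont ω).domRestrict)).bddAbove

theorem le_runMax (hcont : ∀ ω, ContinuousOn (fun t => S t ω) (Icc (0:ℝ) T)) (ω : Ω)
    {t : ℝ} (ht : t ∈ Icc (0:ℝ) T) : S t ω ≤ runMax S T ω :=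
  le_ciSup (bddAbove_range_of_continuousOn_Icc hcont ω) ⟨t, ht⟩

theorem setOf_lt_runMax_eq_iUnion (hcont : ∀ ω, ContinuousOn (fun t => S t ω) (Icc (0:ℝ) T))
    {d : ℕ → Icc (0:ℝ) T} (hd : DenseRange d) (c : ℝ) :
    {ω | c < runMax S T ω} = ⋃ n, {ω | c < S (d n) ω} := by
  have : Nonempty (Icc (0:ℝ) T) := ⟨d 0⟩
  ext ω
  simp only [mem_ofPred_eq, mem_iUnion, runMax,
    lt_ciSup_iff (bddAbove_range_of_continuousOn_Icc hcont ω)]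
  constructor
  · rintro ⟨t, ht⟩
    exact hd.exists_mem_open (isOpen_lt continuous_const (hcont ω).domRestrict) ⟨t, ht⟩
  · rintro ⟨n, hn⟩
    exact ⟨d n, hn⟩

theorem measurableSet_setOf_lt_runMax (hT : 0 ≤ T)
    (hadp : ∀ t ∈ Icc (0:ℝ) T, StronglyMeasurable[ℱ t] (S t))
    (hcont : ∀ ω, ContinuousOn (fun t => S t ω) (Icc (0:ℝ) T)) (c : ℝ) :
    MeasurableSet {ω | c < runMax S T ω} := by
  have : Nonempty (Icc (0:ℝ) T) := (nonempty_Icc.2 hT).to_subtype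
  obtain ⟨d, hd⟩ := TopologicalSpace.exists_dense_seq (Icc (0:ℝ) T)
  rw [setOf_lt_runMax_eq_iUnion hcont hd]
  exact MeasurableSet.iUnion fun n => ℱ.le _ _ <|
    measurableSet_lt measurable_const (hadp _ (d n).2).measurable

theorem mul_measureReal_setOf_lt_runMax_le {μ : Measure Ω} [IsFiniteMeasure μ] (hT : 0 ≤ T)
    (hadp : ∀ t ∈ Icc (0:ℝ) T, StronglyMeasurable[ℱ t] (S t))
    (hmart : ∀ t ∈ Icc (0:ℝ) T, μ[S T|ℱ t] =ᵐ[μ] S t)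
    (hcont : ∀ ω, ContinuousOn (fun t => S t ω) (Icc (0:ℝ) T)) (hint : Integrable (S T) μ)
    (c : ℝ) :
    c * μ.real {ω | c < runMax S T ω} ≤ ∫ ω in {ω | c < runMax S T ω}, S T ω ∂μ := by
  have : Nonempty (Icc (0:ℝ) T) := (nonempty_Icc.2 hT).to_subtype
  obtain ⟨d, hd⟩ := TopologicalSpace.exists_dense_seq (Icc (0:ℝ) T)
  set E := accumulate fun k => {ω | c < S (d k) ω}
  have hE_meas : ∀ n, MeasurableSet (E n) := fun n =>
    MeasurableSet.biUnion (to_countable _) fun k _ => ℱ.le _ _ <|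
      measurableSet_lt measurable_const (hadp _ (d k).2).measurable
  have hE_le : ∀ n, c * μ.real (E n) ≤ ∫ ω in E n, S T ω ∂μ := by
    intro n
    have hIcc : ∀ t ∈ (Finset.Iic n).image (fun k => (d k : ℝ)), t ∈ Icc (0:ℝ) T := by
      simp only [Finset.mem_image]
      rintro _ ⟨k, -, rfl⟩
      exact (d k).2
    have hE : E n = ⋃ t ∈ (Finset.Iic n).image (fun k => (d k : ℝ)), {ω | c < S t ω} := by
      simp [E, accumulate_def]
    rw [hE]
    exact mul_measureReal_biUnion_lt_le_setIntegral hint (fun t ht => hadp t (hIcc t ht))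
      (fun t ht => hmart t (hIcc t ht)) c
  have hunion : {ω | c < runMax S T ω} = ⋃ n, E n := by
    rw [setOf_lt_runMax_eq_iUnion hcont hd, iUnion_accumulate]
  rw [hunion]
  refine le_of_tendsto_of_tendsto' ?_
    (tendsto_setIntegral_of_monotone hE_meas monotone_accumulate hint.integrableOn) hE_le
  exact ((ENNReal.tendsto_toReal (measure_ne_top μ _)).comp
    (tendsto_measure_iUnion_atTop monotone_accumulate)).const_mul c

end runMax

theorem setIntegral_mul_measureReal_le_of_subset {Ω : Type*} {mΩ : MeasurableSpace Ω}
    {μ : Measure Ω} [IsFiniteMeasure μ] {X : Ω → ℝ} {A B : Set Ω} {m : ℝ}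
    (hA : MeasurableSet A) (hB : MeasurableSet B) (hBA : B ⊆ A) (hX : Integrable X μ)
    (hle : ∀ ω ∈ A \ B, X ω ≤ m) (hge : m * μ.real B ≤ ∫ ω in B, X ω ∂μ) :
    (∫ ω in A, X ω ∂μ) * μ.real B ≤ (∫ ω in B, X ω ∂μ) * μ.real A := by
  have hsplit : A = B ∪ A \ B := (union_sdiff_cancel hBA).symm
  have hint : ∫ ω in A, X ω ∂μ = (∫ ω in B, X ω ∂μ) + ∫ ω in A \ B, X ω ∂μ := by
    conv_lhs => rw [hsplit]
    exact setIntegral_union disjoint_sdiff_right (hA.diff hB) hX.integrableOn hX.integrableOn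
  have hmeas : μ.real A = μ.real B + μ.real (A \ B) := by
    conv_lhs => rw [hsplit]
    exact measureReal_union disjoint_sdiff_right (hA.diff hB) (measure_ne_top μ _)
  have hdiff : ∫ ω in A \ B, X ω ∂μ ≤ m * μ.real (A \ B) := by
    simpa [mul_comm] using setIntegral_mono_on hX.integrableOn (integrableOn_const (by finiteness))
      (hA.diff hB) hle
  rw [hint, hmeas]
  nlinarith [measureReal_nonneg (μ := μ) (s := B), measureReal_nonneg (μ := μ) (s := A \ B)]

theorem stmt_18_general {Ω : Type} [mΩ : MeasurableSpace Ω] (ℙ : Measure Ω) [IsProbabilityMeasure ℙ]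
    (ℱ : Filtration ℝ mΩ) (S : ℝ → Ω → ℝ) (s₀ T : ℝ) (hT : 0 < T)
    (hS : IsNonnegContMart ℙ ℱ S s₀ T) :
    ∀ m m' : ℝ, 0 ≤ m → m ≤ m' →
      (∫ ω in {ω | m < runMax S T ω}, S T ω ∂ℙ) * (ℙ {ω | m' < runMax S T ω}).toReal
        ≤ (∫ ω in {ω | m' < runMax S T ω}, S T ω ∂ℙ)
            * (ℙ {ω | m < runMax S T ω}).toReal := by
  intro m m' _ hmm'
  have hTI : T ∈ Icc (0:ℝ) T := ⟨hT.le, le_rfl⟩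
  refine setIntegral_mul_measureReal_le_of_subset
    (measurableSet_setOf_lt_runMax hT.le hS.adapted hS.contPaths m)
    (measurableSet_setOf_lt_runMax hT.le hS.adapted hS.contPaths m')
    (fun ω hω => hmm'.trans_lt hω) (hS.integrable T hTI) (fun ω hω => ?_)
    (mul_measureReal_setOf_lt_runMax_le hT.le hS.adapted
      (fun t ht => hS.mart t T ht hTI ht.2) hS.contPaths (hS.integrable T hTI) m')
  exact (le_runMax hS.contPaths ω hTI).trans (not_lt.1 hω.2)

/-- For all `0 ≤ m ≤ m'`,
`E[S_T·1_{M_T > m}]·ℙ(M_T > m') ≤ E[S_T·1_{M_T > m'}]·ℙ(M_T > m)`; i.e. the function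
`d(m) = E[S_T | M_T > m]` is nondecreasing (where defined). -/
theorem stmt_18 {Ω : Type} [mΩ : MeasurableSpace Ω] (ℙ : Measure Ω) [IsProbabilityMeasure ℙ]
    (ℱ : Filtration ℝ mΩ) (S : ℝ → Ω → ℝ) (s₀ T : ℝ) (hs₀ : 0 < s₀) (hT : 0 < T)
    (hS : IsNonnegContMart ℙ ℱ S s₀ T) :
    ∀ m m' : ℝ, 0 ≤ m → m ≤ m' →
      (∫ ω in {ω | m < runMax S T ω}, S T ω ∂ℙ) * (ℙ {ω | m' < runMax S T ω}).toReal
        ≤ (∫ ω in {ω | m' < runMax S T ω}, S T ω ∂ℙ)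
            * (ℙ {ω | m < runMax S T ω}).toReal :=
  stmt_18_general (mΩ := mΩ) ℙ ℱ S s₀ T hT hS
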